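/- arXiv:1001.2004 — 3 statements merged into one kernel-verified Lean document; each statement's English description precedes it below -/
import Mathlib

section
/- Let A₄ = D_x²Dـy² + D_x + D_y + 1. If m, n, a, b, c, p, q, r : ℝ² → ℝ are smooth functions such that A₄ = (D_x + m) ∘ (D_x + n) ∘ (D_y² + aD_x + bD_y + c) + pD_x + qD_y + r as operators on smooth functions, then n = −m, a = b = c = 0, p = q = r = 1, and m satisfies m² + m_x = 0; that is, every incomplete factorization of A₄ of factorization type (X)(X)(Y²) with remainder of order at most one has the form A₄ = (D_x + m) ∘ (D_x − m) ∘ D_y² + D_x + D_y + 1 with m² + m_x = 0, and the common obstacle D_x + D_y + 1 is unique. -/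
/-- The partial derivative operator `D_x` acting on functions of two real variables. -/
noncomputable def Dx (u : ℝ × ℝ → ℝ) : ℝ × ℝ → ℝ := fun p => fderiv ℝ u p (1, 0)

/-- The partial derivative operator `D_y` acting on functions of two real variables. -/
noncomputable def Dy (u : ℝ × ℝ → ℝ) : ℝ × ℝ → ℝ := fun p => fderiv ℝ u p (0, 1)

theorem contDiff_Dx' {u : ℝ × ℝ → ℝ} (hu : ContDiff ℝ (⊤ : ℕ∞) u) : ContDiff ℝ (⊤ : ℕ∞) (Dx u) := by
  unfold Dx
  exact (hu.fderiv_right (by simp)).clm_apply contDiff_const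

theorem contDiff_Dy' {u : ℝ × ℝ → ℝ} (hu : ContDiff ℝ (⊤ : ℕ∞) u) : ContDiff ℝ (⊤ : ℕ∞) (Dy u) := by
  unfold Dy
  exact (hu.fderiv_right (by simp)).clm_apply contDiff_const

theorem differentiable_Dx' {u : ℝ × ℝ → ℝ} (hu : ContDiff ℝ (⊤ : ℕ∞) u) :
    Differentiable ℝ (Dx u) := (contDiff_Dx' hu).differentiable (by simp)

theorem differentiable_Dy' {u : ℝ × ℝ → ℝ} (hu : ContDiff ℝ (⊤ : ℕ∞) u) :
    Differentiable ℝ (Dy u) := (contDiff_Dy' hu).differentiable (by simp)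

theorem Dx_add {f g : ℝ × ℝ → ℝ} {pt : ℝ × ℝ} (hf : DifferentiableAt ℝ f pt)
    (hg : DifferentiableAt ℝ g pt) :
    Dx (fun s => f s + g s) pt = Dx f pt + Dx g pt := by
  simp only [Dx, fderiv_fun_add hf hg, ContinuousLinearMap.add_apply]

theorem Dy_add {f g : ℝ × ℝ → ℝ} {pt : ℝ × ℝ} (hf : DifferentiableAt ℝ f pt)
    (hg : DifferentiableAt ℝ g pt) :
    Dy (fun s => f s + g s) pt = Dy f pt + Dy g pt := by
  simp only [Dy, fderiv_fun_add hf hg, ContinuousLinearMap.add_apply]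

theorem Dx_mul {f g : ℝ × ℝ → ℝ} {pt : ℝ × ℝ} (hf : DifferentiableAt ℝ f pt)
    (hg : DifferentiableAt ℝ g pt) :
    Dx (fun s => f s * g s) pt = f pt * Dx g pt + g pt * Dx f pt := by
  simp only [Dx, fderiv_fun_mul hf hg, ContinuousLinearMap.add_apply,
    ContinuousLinearMap.smul_apply, smul_eq_mul]

theorem Dy_mul {f g : ℝ × ℝ → ℝ} {pt : ℝ × ℝ} (hf : DifferentiableAt ℝ f pt)
    (hg : DifferentiableAt ℝ g pt) :
    Dy (fun s => f s * g s) pt = f pt * Dy g pt + g pt * Dy f pt := by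
  simp only [Dy, fderiv_fun_mul hf hg, ContinuousLinearMap.add_apply,
    ContinuousLinearMap.smul_apply, smul_eq_mul]

theorem Dx_const {k : ℝ} {pt : ℝ × ℝ} : Dx (fun _ => k) pt = 0 := by simp [Dx]
theorem Dy_const {k : ℝ} {pt : ℝ × ℝ} : Dy (fun _ => k) pt = 0 := by simp [Dy]

theorem Dx_neg {f : ℝ × ℝ → ℝ} {pt : ℝ × ℝ} : Dx (fun s => -f s) pt = -Dx f pt := by
  simp [Dx, fderiv_neg]
theorem Dy_neg {f : ℝ × ℝ → ℝ} {pt : ℝ × ℝ} : Dy (fun s => -f s) pt = -Dy f pt := by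
  simp [Dy, fderiv_neg]

theorem Dx_const_fun {k : ℝ} : Dx (fun _ => k) = fun _ => (0:ℝ) := funext fun _ => Dx_const
theorem Dy_const_fun {k : ℝ} : Dy (fun _ => k) = fun _ => (0:ℝ) := funext fun _ => Dy_const

theorem Dx_x {x0 : ℝ} {pt : ℝ × ℝ} : Dx (fun s => s.1 - x0) pt = 1 := by
  simp [Dx, fderiv_sub_const, fderiv_fst]
theorem Dy_x {x0 : ℝ} {pt : ℝ × ℝ} : Dy (fun s => s.1 - x0) pt = 0 := by
  simp [Dy, fderiv_sub_const, fderiv_fst]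
theorem Dx_y {y0 : ℝ} {pt : ℝ × ℝ} : Dx (fun s => s.2 - y0) pt = 0 := by
  simp [Dx, fderiv_sub_const, fderiv_snd]
theorem Dy_y {y0 : ℝ} {pt : ℝ × ℝ} : Dy (fun s => s.2 - y0) pt = 1 := by
  simp [Dy, fderiv_sub_const, fderiv_snd]

/-- For `A₄ = D_x²D_y² + D_x + D_y + 1`, any incomplete factorization
`A₄ = (D_x + m) ∘ (D_x + n) ∘ (D_y² + aD_x + bD_y + c) + pD_x + qD_y + r`
of type `(X)(X)(Y²)` with remainder of order at most one forces `n = −m`,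
`a = b = c = 0`, `p = q = r = 1` and `m² + m_x = 0`; in particular the common
obstacle `D_x + D_y + 1` is unique. -/
theorem unique_obstacle_type_X_X_Y2
    (m n a b c p q r : ℝ × ℝ → ℝ)
    (hm : ContDiff ℝ (⊤ : ℕ∞) m) (hn : ContDiff ℝ (⊤ : ℕ∞) n)
    (ha : ContDiff ℝ (⊤ : ℕ∞) a) (hb : ContDiff ℝ (⊤ : ℕ∞) b) (hc : ContDiff ℝ (⊤ : ℕ∞) c)
    (hp : ContDiff ℝ (⊤ : ℕ∞) p) (hq : ContDiff ℝ (⊤ : ℕ∞) q) (hr : ContDiff ℝ (⊤ : ℕ∞) r)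
    (heq : ∀ u : ℝ × ℝ → ℝ, ContDiff ℝ (⊤ : ℕ∞) u → ∀ pt : ℝ × ℝ,
      Dx (Dx (Dy (Dy u))) pt + Dx u pt + Dy u pt + u pt
        =
      (Dx (fun q' =>
          Dx (fun s => Dy (Dy u) s + a s * Dx u s + b s * Dy u s + c s * u s) q'
            + n q' * (Dy (Dy u) q' + a q' * Dx u q' + b q' * Dy u q' + c q' * u q')) pt
        + m pt *
          (Dx (fun s => Dy (Dy u) s + a s * Dx u s + b s * Dy u s + c s * u s) pt
            + n pt * (Dy (Dy u) pt + a pt * Dx u pt + b pt * Dy u pt + c pt * u pt)))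
        + p pt * Dx u pt + q pt * Dy u pt + r pt * u pt) :
    (∀ pt : ℝ × ℝ, n pt = -m pt) ∧
    (∀ pt : ℝ × ℝ, a pt = 0) ∧ (∀ pt : ℝ × ℝ, b pt = 0) ∧ (∀ pt : ℝ × ℝ, c pt = 0) ∧
    (∀ pt : ℝ × ℝ, p pt = 1) ∧ (∀ pt : ℝ × ℝ, q pt = 1) ∧ (∀ pt : ℝ × ℝ, r pt = 1) ∧
    (∀ pt : ℝ × ℝ, m pt ^ 2 + Dx m pt = 0) := by
  have hm1 : Differentiable ℝ m := hm.differentiable (by simp)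
  have hn1 : Differentiable ℝ n := hn.differentiable (by simp)
  have ha1 : Differentiable ℝ a := ha.differentiable (by simp)
  have hb1 : Differentiable ℝ b := hb.differentiable (by simp)
  have hc1 : Differentiable ℝ c := hc.differentiable (by simp)
  have hm2 : Differentiable ℝ (Dx m) := differentiable_Dx' hm
  have hn2 : Differentiable ℝ (Dx n) := differentiable_Dx' hn
  have ha2 : Differentiable ℝ (Dx a) := differentiable_Dx' ha
  have hb2 : Differentiable ℝ (Dx b) := differentiable_Dx' hb
  have hc2 : Differentiable ℝ (Dx c) := differentiable_Dx' hc
  -- Stage A : a = 0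
  have hA : ∀ pt0 : ℝ × ℝ, a pt0 = 0 := by
    intro pt0
    have hh := heq (fun s => (s.1 - pt0.1) * ((s.1 - pt0.1) * (s.1 - pt0.1))) (by fun_prop) pt0
    have hDy : Dy (fun s : ℝ × ℝ => (s.1 - pt0.1) * ((s.1 - pt0.1) * (s.1 - pt0.1)))
        = fun _ => 0 := by
      funext s
      simp (disch := fun_prop) only [Dy_mul, Dy_x]
      ring
    have hDx : Dx (fun s : ℝ × ℝ => (s.1 - pt0.1) * ((s.1 - pt0.1) * (s.1 - pt0.1)))
        = fun s => 3 * ((s.1 - pt0.1) * (s.1 - pt0.1)) := by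
      funext s
      simp (disch := fun_prop) only [Dx_mul, Dx_x]
      ring
    simp only [hDy, hDx] at hh
    simp (disch := fun_prop) only [Dx_add, Dx_mul, Dx_const, Dx_x, Dx_y, Dy_add, Dy_mul,
      Dy_const, Dy_x, Dy_y, Dx_const_fun, Dy_const_fun, Dx_neg, sub_self,
      zero_mul, mul_zero, add_zero, zero_add, one_mul, mul_one] at hh
    linarith [hh]
  obtain rfl : a = fun _ => (0:ℝ) := funext hA
  -- Stage B : b = 0
  have hB : ∀ pt0 : ℝ × ℝ, b pt0 = 0 := by
    intro pt0
    have hh := heq (fun s => ((s.1 - pt0.1) * (s.1 - pt0.1)) * (s.2 - pt0.2)) (by fun_prop) pt0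
    have hDy : Dy (fun s : ℝ × ℝ => ((s.1 - pt0.1) * (s.1 - pt0.1)) * (s.2 - pt0.2))
        = fun s => (s.1 - pt0.1) * (s.1 - pt0.1) := by
      funext s
      simp (disch := fun_prop) only [Dy_mul, Dy_x, Dy_y]
      ring
    have hDyy : Dy (fun s : ℝ × ℝ => (s.1 - pt0.1) * (s.1 - pt0.1)) = fun _ => 0 := by
      funext s
      simp (disch := fun_prop) only [Dy_mul, Dy_x]
      ring
    have hDx : Dx (fun s : ℝ × ℝ => ((s.1 - pt0.1) * (s.1 - pt0.1)) * (s.2 - pt0.2))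
        = fun s => 2 * ((s.1 - pt0.1) * (s.2 - pt0.2)) := by
      funext s
      simp (disch := fun_prop) only [Dx_mul, Dx_x, Dx_y]
      ring
    simp only [hDy, hDyy, hDx] at hh
    simp (disch := fun_prop) only [Dx_add, Dx_mul, Dx_const, Dx_x, Dx_y, Dy_add, Dy_mul,
      Dy_const, Dy_x, Dy_y, Dx_const_fun, Dy_const_fun, Dx_neg, sub_self,
      zero_mul, mul_zero, add_zero, zero_add, one_mul, mul_one] at hh
    linarith [hh]
  obtain rfl : b = fun _ => (0:ℝ) := funext hB
  -- Stage N : n = -m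
  have hN : ∀ pt0 : ℝ × ℝ, n pt0 = -m pt0 := by
    intro pt0
    have hh := heq (fun s => (s.1 - pt0.1) * ((s.2 - pt0.2) * (s.2 - pt0.2))) (by fun_prop) pt0
    have hDx : Dx (fun s : ℝ × ℝ => (s.1 - pt0.1) * ((s.2 - pt0.2) * (s.2 - pt0.2)))
        = fun s => (s.2 - pt0.2) * (s.2 - pt0.2) := by
      funext s
      simp (disch := fun_prop) only [Dx_mul, Dx_x, Dx_y]
      ring
    have hDy : Dy (fun s : ℝ × ℝ => (s.1 - pt0.1) * ((s.2 - pt0.2) * (s.2 - pt0.2)))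
        = fun s => 2 * ((s.1 - pt0.1) * (s.2 - pt0.2)) := by
      funext s
      simp (disch := fun_prop) only [Dy_mul, Dy_x, Dy_y]
      ring
    have hDyy : Dy (fun s : ℝ × ℝ => 2 * ((s.1 - pt0.1) * (s.2 - pt0.2)))
        = fun s => 2 * (s.1 - pt0.1) := by
      funext s
      simp (disch := fun_prop) only [Dy_mul, Dy_x, Dy_y, Dy_const]
      ring
    have hDyyx : Dx (fun s : ℝ × ℝ => 2 * (s.1 - pt0.1)) = fun _ => (2:ℝ) := by
      funext s
      simp (disch := fun_prop) only [Dx_mul, Dx_x, Dx_const]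
      ring
    simp only [hDx, hDy, hDyy, hDyyx] at hh
    simp (disch := fun_prop) only [Dx_add, Dx_mul, Dx_const, Dx_x, Dx_y, Dy_add, Dy_mul,
      Dy_const, Dy_x, Dy_y, Dx_const_fun, Dy_const_fun, Dx_neg, sub_self,
      zero_mul, mul_zero, add_zero, zero_add, one_mul, mul_one] at hh
    linarith [hh]
  obtain rfl : n = fun pt => -m pt := funext hN
  -- Stage C : c = 0
  have hC : ∀ pt0 : ℝ × ℝ, c pt0 = 0 := by
    intro pt0
    have hh := heq (fun s => (s.1 - pt0.1) * (s.1 - pt0.1)) (by fun_prop) pt0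
    have hDy : Dy (fun s : ℝ × ℝ => (s.1 - pt0.1) * (s.1 - pt0.1)) = fun _ => 0 := by
      funext s
      simp (disch := fun_prop) only [Dy_mul, Dy_x]
      ring
    have hDx : Dx (fun s : ℝ × ℝ => (s.1 - pt0.1) * (s.1 - pt0.1))
        = fun s => 2 * (s.1 - pt0.1) := by
      funext s
      simp (disch := fun_prop) only [Dx_mul, Dx_x]
      ring
    simp only [hDy, hDx] at hh
    simp (disch := fun_prop) only [Dx_add, Dx_mul, Dx_const, Dx_x, Dx_y, Dy_add, Dy_mul,
      Dy_const, Dy_x, Dy_y, Dx_const_fun, Dy_const_fun, Dx_neg, sub_self,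
      zero_mul, mul_zero, add_zero, zero_add, one_mul, mul_one] at hh
    linarith [hh]
  obtain rfl : c = fun _ => (0:ℝ) := funext hC
  -- Stage M : m^2 + Dx m = 0
  have hM : ∀ pt0 : ℝ × ℝ, m pt0 ^ 2 + Dx m pt0 = 0 := by
    intro pt0
    have hh := heq (fun s => (s.2 - pt0.2) * (s.2 - pt0.2)) (by fun_prop) pt0
    have hDx : Dx (fun s : ℝ × ℝ => (s.2 - pt0.2) * (s.2 - pt0.2)) = fun _ => 0 := by
      funext s
      simp (disch := fun_prop) only [Dx_mul, Dx_y]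
      ring
    have hDy : Dy (fun s : ℝ × ℝ => (s.2 - pt0.2) * (s.2 - pt0.2))
        = fun s => 2 * (s.2 - pt0.2) := by
      funext s
      simp (disch := fun_prop) only [Dy_mul, Dy_y]
      ring
    have hDyy : Dy (fun s : ℝ × ℝ => 2 * (s.2 - pt0.2)) = fun _ => (2:ℝ) := by
      funext s
      simp (disch := fun_prop) only [Dy_mul, Dy_y, Dy_const]
      ring
    simp only [hDx, hDy, hDyy] at hh
    simp (disch := fun_prop) only [Dx_add, Dx_mul, Dx_const, Dx_x, Dx_y, Dy_add, Dy_mul,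
      Dy_const, Dy_x, Dy_y, Dx_const_fun, Dy_const_fun, Dx_neg, sub_self,
      zero_mul, mul_zero, add_zero, zero_add, one_mul, mul_one] at hh
    ring_nf at hh ⊢
    linarith [hh]
  -- Stage P : p = 1
  have hP : ∀ pt0 : ℝ × ℝ, p pt0 = 1 := by
    intro pt0
    have hh := heq (fun s => s.1 - pt0.1) (by fun_prop) pt0
    have hDy : Dy (fun s : ℝ × ℝ => s.1 - pt0.1) = fun _ => 0 := funext fun _ => Dy_x
    have hDx : Dx (fun s : ℝ × ℝ => s.1 - pt0.1) = fun _ => 1 := funext fun _ => Dx_x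
    simp only [hDy, hDx] at hh
    simp (disch := fun_prop) only [Dx_add, Dx_mul, Dx_const, Dx_x, Dx_y, Dy_add, Dy_mul,
      Dy_const, Dy_x, Dy_y, Dx_const_fun, Dy_const_fun, Dx_neg, sub_self,
      zero_mul, mul_zero, add_zero, zero_add, one_mul, mul_one] at hh
    linarith [hh]
  -- Stage Q : q = 1
  have hQ : ∀ pt0 : ℝ × ℝ, q pt0 = 1 := by
    intro pt0
    have hh := heq (fun s => s.2 - pt0.2) (by fun_prop) pt0
    have hDy : Dy (fun s : ℝ × ℝ => s.2 - pt0.2) = fun _ => 1 := funext fun _ => Dy_y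
    have hDx : Dx (fun s : ℝ × ℝ => s.2 - pt0.2) = fun _ => 0 := funext fun _ => Dx_y
    simp only [hDy, hDx] at hh
    simp (disch := fun_prop) only [Dx_add, Dx_mul, Dx_const, Dx_x, Dx_y, Dy_add, Dy_mul,
      Dy_const, Dy_x, Dy_y, Dx_const_fun, Dy_const_fun, Dx_neg, sub_self,
      zero_mul, mul_zero, add_zero, zero_add, one_mul, mul_one] at hh
    linarith [hh]
  -- Stage R : r = 1
  have hR : ∀ pt0 : ℝ × ℝ, r pt0 = 1 := by
    intro pt0
    have hh := heq (fun _ => (1:ℝ)) contDiff_const pt0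
    simp (disch := fun_prop) only [Dx_add, Dx_mul, Dx_const, Dx_x, Dx_y, Dy_add, Dy_mul,
      Dy_const, Dy_x, Dy_y, Dx_const_fun, Dy_const_fun, Dx_neg, sub_self,
      zero_mul, mul_zero, add_zero, zero_add, one_mul, mul_one] at hh
    linarith [hh]
  exact ⟨fun _ => rfl, fun _ => rfl, fun _ => rfl, fun _ => rfl, hP, hQ, hR, hM⟩
end

section
/- Let U = {(x,y) ∈ ℝ² : x ≠ 1}, and consider, as operators on smooth functions on U: L = D_xD_y + (1/(1−x))D_x + xD_y + (2−x)/(x−1)², F = D_x + x/(x−1), M = D_x + 1, G = D_xD_y + (1/(1−x))D_x + ((x²−x+1)/(x−1))D_y − x/(x−1)². Then L ∘ F = M ∘ G; that is, the operator A = L ∘ F has two different factorizations into two factors, whose right factor F and left factor M have principal symbols that are both X (so gcd(Sym(F), Sym(M)) ≠ 1). -/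
/-- `L = D_xD_y + (1/(1−x))D_x + xD_y + (2−x)/(x−1)²` on `U = {x ≠ 1}`. -/
noncomputable def Lop (u : ℝ × ℝ → ℝ) : ℝ × ℝ → ℝ := fun p =>
  Dx (Dy u) p + (1 / (1 - p.1)) * Dx u p + p.1 * Dy u p
    + ((2 - p.1) / (p.1 - 1) ^ 2) * u p

/-- `F = D_x + x/(x−1)`. -/
noncomputable def Fop (u : ℝ × ℝ → ℝ) : ℝ × ℝ → ℝ := fun p =>
  Dx u p + (p.1 / (p.1 - 1)) * u p

/-- `M = D_x + 1`. -/
noncomputable def Mop (u : ℝ × ℝ → ℝ) : ℝ × ℝ → ℝ := fun p =>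
  Dx u p + u p

/-- `G = D_xD_y + (1/(1−x))D_x + ((x²−x+1)/(x−1))D_y − x/(x−1)²`. -/
noncomputable def Gop (u : ℝ × ℝ → ℝ) : ℝ × ℝ → ℝ := fun p =>
  Dx (Dy u) p + (1 / (1 - p.1)) * Dx u p
    + ((p.1 ^ 2 - p.1 + 1) / (p.1 - 1)) * Dy u p
    - (p.1 / (p.1 - 1) ^ 2) * u p

open scoped Topology

section helpers
variable {u v : ℝ × ℝ → ℝ} {p : ℝ × ℝ} {φ : ℝ → ℝ} {d : ℝ}

lemma hasFDerivAt_coef (hφ : HasDerivAt φ d p.1) :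
    HasFDerivAt (fun q : ℝ × ℝ => φ q.1)
      ((ContinuousLinearMap.smulRight (1 : ℝ →L[ℝ] ℝ) d).comp
        (ContinuousLinearMap.fst ℝ ℝ ℝ)) p :=
  hφ.hasFDerivAt.comp p hasFDerivAt_fst

lemma diff_coef (hφ : HasDerivAt φ d p.1) :
    DifferentiableAt ℝ (fun q : ℝ × ℝ => φ q.1) p :=
  (hasFDerivAt_coef hφ).differentiableAt

lemma Dx_add_s18 (hu : DifferentiableAt ℝ u p) (hv : DifferentiableAt ℝ v p) :
    Dx (fun q => u q + v q) p = Dx u p + Dx v p := by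
  simp [Dx, fderiv_fun_add hu hv]

lemma Dy_add_s18 (hu : DifferentiableAt ℝ u p) (hv : DifferentiableAt ℝ v p) :
    Dy (fun q => u q + v q) p = Dy u p + Dy v p := by
  simp [Dy, fderiv_fun_add hu hv]

lemma Dx_sub (hu : DifferentiableAt ℝ u p) (hv : DifferentiableAt ℝ v p) :
    Dx (fun q => u q - v q) p = Dx u p - Dx v p := by
  simp [Dx, fderiv_fun_sub hu hv]

lemma diff_coef_mul (hφ : HasDerivAt φ d p.1) (hv : DifferentiableAt ℝ v p) :
    DifferentiableAt ℝ (fun q : ℝ × ℝ => φ q.1 * v q) p :=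
  (diff_coef hφ).mul hv

lemma Dx_coef_mul (hφ : HasDerivAt φ d p.1) (hv : DifferentiableAt ℝ v p) :
    Dx (fun q => φ q.1 * v q) p = d * v p + φ p.1 * Dx v p := by
  have h := fderiv_fun_mul (diff_coef hφ) hv
  have hc := (hasFDerivAt_coef hφ).fderiv
  simp only [Dx, h, hc]
  simp
  ring

lemma Dy_coef_mul (hφ : HasDerivAt φ d p.1) (hv : DifferentiableAt ℝ v p) :
    Dy (fun q => φ q.1 * v q) p = φ p.1 * Dy v p := by
  have h := fderiv_fun_mul (diff_coef hφ) hv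
  have hc := (hasFDerivAt_coef hφ).fderiv
  simp only [Dy, h, hc]
  simp

lemma Dx_congr {f g : ℝ × ℝ → ℝ} (h : f =ᶠ[nhds p] g) : Dx f p = Dx g p := by
  simp only [Dx, h.fderiv_eq]

lemma contDiffAt_Dx {n m : WithTop ℕ∞} (hu : ContDiffAt ℝ n u p) (h : m + 1 ≤ n) :
    ContDiffAt ℝ m (Dx u) p :=
  (hu.fderiv_right h).clm_apply contDiffAt_const

lemma contDiffAt_Dy {n m : WithTop ℕ∞} (hu : ContDiffAt ℝ n u p) (h : m + 1 ≤ n) :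
    ContDiffAt ℝ m (Dy u) p :=
  (hu.fderiv_right h).clm_apply contDiffAt_const

lemma Dy_Dx_symm (hu : ContDiffAt ℝ 2 u p) : Dy (Dx u) p = Dx (Dy u) p := by
  have hd : DifferentiableAt ℝ (fderiv ℝ u) p :=
    (hu.fderiv_right (m := 1) (by norm_num)).differentiableAt one_ne_zero
  have hs : IsSymmSndFDerivAt ℝ u p := hu.isSymmSndFDerivAt (by simp)
  show fderiv ℝ (fun q => fderiv ℝ u q (1, 0)) p (0, 1)
      = fderiv ℝ (fun q => fderiv ℝ u q (0, 1)) p (1, 0)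
  rw [fderiv_clm_apply hd (differentiableAt_const _),
      fderiv_clm_apply hd (differentiableAt_const _)]
  simp [hs.eq]

/-- derivative of `t ↦ t/(t-1)` -/
lemma hasDerivAt_beta {x : ℝ} (hx : x ≠ 1) :
    HasDerivAt (fun t : ℝ => t / (t - 1)) (-1 / ((x - 1) ^ 2)) x := by
  have h := (hasDerivAt_id x).fun_div ((hasDerivAt_id x).sub_const 1) (sub_ne_zero.mpr hx)
  refine h.congr_deriv ?_
  simp only [id_eq, Pi.sub_apply, Pi.pow_apply]
  field_simp
  ring

/-- derivative of `t ↦ 1/(1-t)` -/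
lemma hasDerivAt_alpha {x : ℝ} (hx : x ≠ 1) :
    HasDerivAt (fun t : ℝ => 1 / (1 - t)) (1 / ((x - 1) ^ 2)) x := by
  have hx' : 1 - x ≠ 0 := by intro h; apply hx; linarith
  have h := (hasDerivAt_const x (1 : ℝ)).fun_div
    ((hasDerivAt_const x (1 : ℝ)).sub (hasDerivAt_id x)) hx'
  refine h.congr_deriv ?_
  simp only [id_eq, Pi.sub_apply]
  rw [show (1 - x) ^ 2 = (x - 1) ^ 2 by ring]
  norm_num

/-- derivative of `t ↦ (t²-t+1)/(t-1)` -/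
lemma hasDerivAt_eps {x : ℝ} (hx : x ≠ 1) :
    HasDerivAt (fun t : ℝ => (t ^ 2 - t + 1) / (t - 1))
      ((x ^ 2 - 2 * x) / ((x - 1) ^ 2)) x := by
  have h := (((hasDerivAt_pow 2 x).sub (hasDerivAt_id x)).add_const 1).fun_div
    ((hasDerivAt_id x).sub_const 1) (sub_ne_zero.mpr hx)
  refine h.congr_deriv ?_
  simp only [id_eq, Pi.sub_apply, Pi.pow_apply]
  field_simp
  ring

/-- derivative of `t ↦ t/(t-1)²` -/
lemma hasDerivAt_gam {x : ℝ} (hx : x ≠ 1) :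
    HasDerivAt (fun t : ℝ => t / (t - 1) ^ 2)
      ((-x - 1) / ((x - 1) ^ 3)) x := by
  have h := (hasDerivAt_id x).fun_div (((hasDerivAt_id x).sub_const 1).pow 2)
    (pow_ne_zero 2 (sub_ne_zero.mpr hx))
  refine h.congr_deriv ?_
  simp only [id_eq, Pi.sub_apply, Pi.pow_apply]
  have h1 : x - 1 ≠ 0 := sub_ne_zero.mpr hx
  field_simp
  ring

end helpers

/-- On `U = {x ≠ 1}`, `L ∘ F = M ∘ G`: two different two-factor factorizations of the
same operator `A = L ∘ F`, with right factor `F` and left factor `M` both of principal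
symbol `X`. -/
theorem two_factorizations_with_common_symbol :
    ∀ u : ℝ × ℝ → ℝ,
      ContDiffOn ℝ (⊤ : ℕ∞) u {p : ℝ × ℝ | p.1 ≠ 1} →
      ∀ p : ℝ × ℝ, p.1 ≠ 1 →
        Lop (Fop u) p = Mop (Gop u) p := by
  intro u hu p hp
  have hUo : IsOpen {q : ℝ × ℝ | q.1 ≠ 1} := isOpen_ne.preimage continuous_fst
  have hC : ∀ q : ℝ × ℝ, q.1 ≠ 1 → ContDiffAt ℝ 3 u q := fun q hq =>
    (hu.contDiffAt (hUo.mem_nhds hq)).of_le (WithTop.coe_le_coe.mpr le_top)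
  have hx : p.1 - 1 ≠ 0 := sub_ne_zero.mpr hp
  -- differentiability facts at a generic point of U
  have hud : ∀ q : ℝ × ℝ, q.1 ≠ 1 → DifferentiableAt ℝ u q := fun q hq =>
    (hC q hq).differentiableAt (by norm_num)
  have hDxud : ∀ q : ℝ × ℝ, q.1 ≠ 1 → DifferentiableAt ℝ (Dx u) q := fun q hq =>
    (contDiffAt_Dx (m := 2) (hC q hq) (by norm_num)).differentiableAt (by norm_num)
  have hDyud : ∀ q : ℝ × ℝ, q.1 ≠ 1 → DifferentiableAt ℝ (Dy u) q := fun q hq =>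
    (contDiffAt_Dy (m := 2) (hC q hq) (by norm_num)).differentiableAt (by norm_num)
  have hDxDyud : ∀ q : ℝ × ℝ, q.1 ≠ 1 → DifferentiableAt ℝ (Dx (Dy u)) q := fun q hq =>
    (contDiffAt_Dx (m := 1)
      (contDiffAt_Dy (m := 2) (hC q hq) (by norm_num)) (by norm_num)).differentiableAt one_ne_zero
  -- Step 1 : Dy (Fop u) on U
  have hDyF : ∀ q : ℝ × ℝ, q.1 ≠ 1 →
      Dy (Fop u) q = Dx (Dy u) q + (fun t : ℝ => t / (t - 1)) q.1 * Dy u q := by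
    intro q hq
    have hβ := hasDerivAt_beta hq
    have h1 := Dy_add_s18 (p := q) (hDxud q hq) (diff_coef_mul hβ (hud q hq))
    rw [Dy_coef_mul hβ (hud q hq)] at h1
    rw [Dy_Dx_symm ((hC q hq).of_le (by norm_num))] at h1
    exact h1
  -- eventual equality near p
  have hEv : Dy (Fop u) =ᶠ[𝓝 p]
      fun q => Dx (Dy u) q + (fun t : ℝ => t / (t - 1)) q.1 * Dy u q := by
    filter_upwards [hUo.mem_nhds hp] with q hq using hDyF q hq
  have hβp := hasDerivAt_beta hp
  have hαp := hasDerivAt_alpha hp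
  have hεp := hasDerivAt_eps hp
  have hγp := hasDerivAt_gam hp
  -- E1 : Dx Dy (F u) at p
  have E1 : Dx (Dy (Fop u)) p = Dx (Dx (Dy u)) p
      + (-1 / ((p.1 - 1) ^ 2) * Dy u p + p.1 / (p.1 - 1) * Dx (Dy u) p) := by
    have h1 := Dx_add_s18 (p := p) (hDxDyud p hp) (diff_coef_mul hβp (hDyud p hp))
    rw [Dx_coef_mul hβp (hDyud p hp)] at h1
    exact (Dx_congr hEv).trans h1
  -- E2 : Dx (F u) at p
  have E2 : Dx (Fop u) p = Dx (Dx u) p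
      + (-1 / ((p.1 - 1) ^ 2) * u p + p.1 / (p.1 - 1) * Dx u p) := by
    have h1 := Dx_add_s18 (p := p) (hDxud p hp) (diff_coef_mul hβp (hud p hp))
    rw [Dx_coef_mul hβp (hud p hp)] at h1
    exact h1
  -- E3 : Dy (F u) at p
  have E3 : Dy (Fop u) p = Dx (Dy u) p + p.1 / (p.1 - 1) * Dy u p := hDyF p hp
  -- E5 : Dx (G u) at p
  have E5 : Dx (Gop u) p =
      (Dx (Dx (Dy u)) p
        + (1 / ((p.1 - 1) ^ 2) * Dx u p + 1 / (1 - p.1) * Dx (Dx u) p)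
        + ((p.1 ^ 2 - 2 * p.1) / ((p.1 - 1) ^ 2) * Dy u p
            + (p.1 ^ 2 - p.1 + 1) / (p.1 - 1) * Dx (Dy u) p))
      - ((-p.1 - 1) / ((p.1 - 1) ^ 3) * u p + p.1 / (p.1 - 1) ^ 2 * Dx u p) := by
    have dA : DifferentiableAt ℝ (Dx (Dy u)) p := hDxDyud p hp
    have dB : DifferentiableAt ℝ
        (fun q : ℝ × ℝ => (fun t : ℝ => 1 / (1 - t)) q.1 * Dx u q) p :=
      diff_coef_mul hαp (hDxud p hp)
    have dC : DifferentiableAt ℝ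
        (fun q : ℝ × ℝ => (fun t : ℝ => (t ^ 2 - t + 1) / (t - 1)) q.1 * Dy u q) p :=
      diff_coef_mul hεp (hDyud p hp)
    have dD : DifferentiableAt ℝ
        (fun q : ℝ × ℝ => (fun t : ℝ => t / (t - 1) ^ 2) q.1 * u q) p :=
      diff_coef_mul hγp (hud p hp)
    have h1 := Dx_sub (p := p) ((dA.fun_add dB).fun_add dC) dD
    rw [Dx_add_s18 (p := p) (dA.fun_add dB) dC, Dx_add_s18 (p := p) dA dB,
        Dx_coef_mul hαp (hDxud p hp), Dx_coef_mul hεp (hDyud p hp),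
        Dx_coef_mul hγp (hud p hp)] at h1
    exact h1
  -- put everything together
  show Dx (Dy (Fop u)) p + 1 / (1 - p.1) * Dx (Fop u) p + p.1 * Dy (Fop u) p
      + (2 - p.1) / (p.1 - 1) ^ 2 * Fop u p
    = Dx (Gop u) p + Gop u p
  rw [E1, E2, E3, E5]
  show _ = _ + (Dx (Dy u) p + 1 / (1 - p.1) * Dx u p
      + (p.1 ^ 2 - p.1 + 1) / (p.1 - 1) * Dy u p - p.1 / (p.1 - 1) ^ 2 * u p)
  show _ + (2 - p.1) / (p.1 - 1) ^ 2 * (Dx u p + p.1 / (p.1 - 1) * u p) = _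
  have h1x : 1 - p.1 ≠ 0 := by intro h; apply hp; linarith
  field_simp
  ring
end

section
/- Let U = {(x,y) ∈ ℝ² : x ≠ 1} and let L = D_xD_y + (1/(1−x))D_x + xD_y + (2−x)/(x−1)², acting on smooth functions on U. Then L admits no factorization into two monic first-order factors on U: there are no smooth functions a, b on U such that L = (D_x + b) ∘ (D_y + a), and there are no smooth functions a, b on U such that L = (D_y + a) ∘ (D_x + b). (Both Laplace invariants of L, h = c − a_x − ab and k = c − b_y − ab computed from its coefficients a = 1/(1−x), b = x, c = (2−x)/(x−1)², are nowhere zero on U, and the principal symbol XY factors only as X·Y or Y·X.) -/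
lemma Dx_fst (p : ℝ × ℝ) : Dx (fun q => q.1) p = 1 := by
  simp [Dx, hasFDerivAt_fst.fderiv]

lemma Dy_fst (p : ℝ × ℝ) : Dy (fun q => q.1) p = 0 := by
  simp [Dy, hasFDerivAt_fst.fderiv]

lemma Dx_snd (p : ℝ × ℝ) : Dx (fun q => q.2) p = 0 := by
  simp [Dx, hasFDerivAt_snd.fderiv]

lemma Dy_snd (p : ℝ × ℝ) : Dy (fun q => q.2) p = 1 := by
  simp [Dy, hasFDerivAt_snd.fderiv]

lemma Dx_mul_fst (a : ℝ × ℝ → ℝ) (p : ℝ × ℝ) (ha : DifferentiableAt ℝ a p) :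
    Dx (fun q => a q * q.1) p = a p + p.1 * Dx a p := by
  rw [Dx, fderiv_fun_mul ha hasFDerivAt_fst.differentiableAt]
  simp [hasFDerivAt_fst.fderiv, Dx]

lemma Dx_mul_snd (a : ℝ × ℝ → ℝ) (p : ℝ × ℝ) (ha : DifferentiableAt ℝ a p) :
    Dx (fun q => a q * q.2) p = p.2 * Dx a p := by
  rw [Dx, fderiv_fun_mul ha hasFDerivAt_snd.differentiableAt]
  simp [hasFDerivAt_snd.fderiv, Dx]

lemma Dy_mul_snd (b : ℝ × ℝ → ℝ) (p : ℝ × ℝ) (hb : DifferentiableAt ℝ b p) :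
    Dy (fun q => b q * q.2) p = b p + p.2 * Dy b p := by
  rw [Dy, fderiv_fun_mul hb hasFDerivAt_snd.differentiableAt]
  simp [hasFDerivAt_snd.fderiv, Dy]

lemma Dy_mul_fst (b : ℝ × ℝ → ℝ) (p : ℝ × ℝ) (hb : DifferentiableAt ℝ b p) :
    Dy (fun q => b q * q.1) p = p.1 * Dy b p := by
  rw [Dy, fderiv_fun_mul hb hasFDerivAt_fst.differentiableAt]
  simp [hasFDerivAt_fst.fderiv, Dy]

lemma Lop_one (p : ℝ × ℝ) : Lop (fun _ => 1) p = (2 - p.1) / (p.1 - 1) ^ 2 := by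
  have h1 : Dy (fun _ : ℝ × ℝ => (1:ℝ)) = fun _ => 0 := by funext q; simp [Dy]
  simp [Lop, h1, Dx, Dy]

lemma Lop_fst (p : ℝ × ℝ) :
    Lop (fun q => q.1) p = 1 / (1 - p.1) + (2 - p.1) / (p.1 - 1) ^ 2 * p.1 := by
  have h1 : Dy (fun q : ℝ × ℝ => q.1) = fun _ => 0 := by
    funext q; exact Dy_fst q
  simp [Lop, h1, Dx, Dy, hasFDerivAt_fst.fderiv]

lemma Lop_snd (p : ℝ × ℝ) :
    Lop (fun q => q.2) p = p.1 + (2 - p.1) / (p.1 - 1) ^ 2 * p.2 := by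
  have h1 : Dy (fun q : ℝ × ℝ => q.2) = fun _ => 1 := by
    funext q; exact Dy_snd q
  simp [Lop, h1, Dx, Dy, hasFDerivAt_snd.fderiv]

lemma Dx_recip (p : ℝ × ℝ) (hp : p.1 ≠ 1) :
    Dx (fun q : ℝ × ℝ => 1 / (1 - q.1)) p = 1 / (1 - p.1) ^ 2 := by
  have hne : (1 : ℝ) - p.1 ≠ 0 := sub_ne_zero.mpr (Ne.symm hp)
  have hg : HasDerivAt (fun t : ℝ => (1 - t)⁻¹) (-(-1) / (1 - p.1) ^ 2) p.1 :=
    ((hasDerivAt_id p.1).const_sub 1).inv hne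
  have hF : HasFDerivAt (fun q : ℝ × ℝ => (1 - q.1)⁻¹)
      ((ContinuousLinearMap.smulRight (1 : ℝ →L[ℝ] ℝ) (-(-1) / (1 - p.1) ^ 2)).comp
        (ContinuousLinearMap.fst ℝ ℝ ℝ)) p :=
    hg.hasFDerivAt.comp p hasFDerivAt_fst
  have h3 : (fun q : ℝ × ℝ => 1 / (1 - q.1)) = fun q : ℝ × ℝ => (1 - q.1)⁻¹ := by
    funext q; rw [one_div]
  rw [Dx, h3, hF.fderiv]
  simp

/-- On `U = {x ≠ 1}`, the operator `L = D_xD_y + (1/(1−x))D_x + xD_y + (2−x)/(x−1)²`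
admits no factorization into two monic first-order factors: neither of the form
`(D_x + b) ∘ (D_y + a)` nor of the form `(D_y + a) ∘ (D_x + b)`. -/
theorem no_factorization_example :
    (¬ ∃ a b : ℝ × ℝ → ℝ,
      ContDiffOn ℝ (⊤ : ℕ∞) a {p : ℝ × ℝ | p.1 ≠ 1} ∧
      ContDiffOn ℝ (⊤ : ℕ∞) b {p : ℝ × ℝ | p.1 ≠ 1} ∧
      ∀ u : ℝ × ℝ → ℝ, ContDiffOn ℝ (⊤ : ℕ∞) u {p : ℝ × ℝ | p.1 ≠ 1} →
        ∀ p : ℝ × ℝ, p.1 ≠ 1 →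
          Lop u p = Dx (fun q => Dy u q + a q * u q) p
            + b p * (Dy u p + a p * u p)) ∧
    (¬ ∃ a b : ℝ × ℝ → ℝ,
      ContDiffOn ℝ (⊤ : ℕ∞) a {p : ℝ × ℝ | p.1 ≠ 1} ∧
      ContDiffOn ℝ (⊤ : ℕ∞) b {p : ℝ × ℝ | p.1 ≠ 1} ∧
      ∀ u : ℝ × ℝ → ℝ, ContDiffOn ℝ (⊤ : ℕ∞) u {p : ℝ × ℝ | p.1 ≠ 1} →
        ∀ p : ℝ × ℝ, p.1 ≠ 1 →
          Lop u p = Dy (fun q => Dx u q + b q * u q) p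
            + a p * (Dx u p + b p * u p)) := by
  have hU : IsOpen {p : ℝ × ℝ | p.1 ≠ 1} := isOpen_ne.preimage continuous_fst
  have h00 : ((0:ℝ), (0:ℝ)) ∈ {p : ℝ × ℝ | p.1 ≠ 1} := by norm_num
  constructor
  · rintro ⟨a, b, ha, hb, h⟩
    have haD : ∀ p : ℝ × ℝ, p.1 ≠ 1 → DifferentiableAt ℝ a p := fun p hp =>
      (ha.contDiffAt (hU.mem_nhds hp)).differentiableAt (by simp)
    -- u = 1 : c = a_x + b a
    have eq1 : ∀ p : ℝ × ℝ, p.1 ≠ 1 →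
        (2 - p.1) / (p.1 - 1) ^ 2 = Dx a p + b p * a p := by
      intro p hp
      have H := h (fun _ => 1) contDiff_const.contDiffOn p hp
      rw [Lop_one] at H
      have hfun : (fun q : ℝ × ℝ => Dy (fun _ => (1:ℝ)) q + a q * 1) = a := by
        funext q; simp [Dy]
      rw [hfun] at H
      simpa [Dy] using H
    -- u = x : a = 1/(1-x)
    have eq2 : ∀ p : ℝ × ℝ, p.1 ≠ 1 → a p = 1 / (1 - p.1) := by
      intro p hp
      have H := h (fun q => q.1) contDiff_fst.contDiffOn p hp
      rw [Lop_fst] at H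
      have hfun : (fun q : ℝ × ℝ => Dy (fun r : ℝ × ℝ => r.1) q + a q * q.1)
          = fun q => a q * q.1 := by
        funext q; rw [Dy_fst]; ring
      rw [hfun, Dx_mul_fst a p (haD p hp), Dy_fst] at H
      have e1 := eq1 p hp
      linear_combination p.1 * e1 - H
    -- u = y : b (0,0) = 0
    have hb00 : b (0, 0) = 0 := by
      have H := h (fun q => q.2) contDiff_snd.contDiffOn (0, 0) h00
      rw [Lop_snd] at H
      have hfun : (fun q : ℝ × ℝ => Dy (fun r : ℝ × ℝ => r.2) q + a q * q.2)
          = fun q => 1 + a q * q.2 := by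
        funext q; rw [Dy_snd]
      rw [hfun] at H
      rw [show Dx (fun q : ℝ × ℝ => 1 + a q * q.2) (0, 0)
            = Dx (fun q : ℝ × ℝ => a q * q.2) (0, 0) by
          simp only [Dx]; rw [fderiv_const_add]] at H
      rw [Dx_mul_snd a (0, 0) (haD (0, 0) h00), Dy_snd] at H
      norm_num at H
      exact H.symm
    -- a agrees with 1/(1-x) near (0,0)
    have heq : a =ᶠ[nhds ((0:ℝ), (0:ℝ))] fun q : ℝ × ℝ => 1 / (1 - q.1) := by
      filter_upwards [hU.mem_nhds h00] with q hq
      exact eq2 q hq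
    have hDxa : Dx a (0, 0) = 1 := by
      have hfd : fderiv ℝ a ((0:ℝ), (0:ℝ))
          = fderiv ℝ (fun q : ℝ × ℝ => 1 / (1 - q.1)) ((0:ℝ), (0:ℝ)) :=
        heq.fderiv_eq
      have := Dx_recip (0, 0) h00
      simp only [Dx] at this ⊢
      rw [hfd, this]
      norm_num
    have e1 := eq1 (0, 0) h00
    rw [hDxa, hb00] at e1
    norm_num at e1
  · rintro ⟨a, b, ha, hb, h⟩
    have hbD : ∀ p : ℝ × ℝ, p.1 ≠ 1 → DifferentiableAt ℝ b p := fun p hp =>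
      (hb.contDiffAt (hU.mem_nhds hp)).differentiableAt (by simp)
    -- u = 1 : c = b_y + a b
    have eq1 : ∀ p : ℝ × ℝ, p.1 ≠ 1 →
        (2 - p.1) / (p.1 - 1) ^ 2 = Dy b p + a p * b p := by
      intro p hp
      have H := h (fun _ => 1) contDiff_const.contDiffOn p hp
      rw [Lop_one] at H
      have hfun : (fun q : ℝ × ℝ => Dx (fun _ => (1:ℝ)) q + b q * 1) = b := by
        funext q; simp [Dx]
      rw [hfun] at H
      simpa [Dx] using H
    -- u = y : b = x
    have eq2 : ∀ p : ℝ × ℝ, p.1 ≠ 1 → b p = p.1 := by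
      intro p hp
      have H := h (fun q => q.2) contDiff_snd.contDiffOn p hp
      rw [Lop_snd] at H
      have hfun : (fun q : ℝ × ℝ => Dx (fun r : ℝ × ℝ => r.2) q + b q * q.2)
          = fun q => b q * q.2 := by
        funext q; rw [Dx_snd]; ring
      rw [hfun, Dy_mul_snd b p (hbD p hp), Dx_snd] at H
      have e1 := eq1 p hp
      linear_combination p.2 * e1 - H
    -- b agrees with x near (0,0), so Dy b (0,0) = 0
    have heq : b =ᶠ[nhds ((0:ℝ), (0:ℝ))] fun q : ℝ × ℝ => q.1 := by
      filter_upwards [hU.mem_nhds h00] with q hq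
      exact eq2 q hq
    have hDyb : Dy b (0, 0) = 0 := by
      have hfd : fderiv ℝ b ((0:ℝ), (0:ℝ))
          = fderiv ℝ (fun q : ℝ × ℝ => q.1) ((0:ℝ), (0:ℝ)) := heq.fderiv_eq
      have := Dy_fst ((0:ℝ), (0:ℝ))
      simp only [Dy] at this ⊢
      rw [hfd, this]
    have e1 := eq1 (0, 0) h00
    rw [hDyb, eq2 (0, 0) h00] at e1
    norm_num at e1
end
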